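/- Strict monotonicity of the distortion expression on the interior of 𝒟3 (Lemma 5): Let σ²>0 and ρ∈(0,1). Define, for 0<D1<σ² and 0<D2≤σ², F(D1,D2) = σ²·(2ρ√((σ²−D1)(σ²−D2)) + D1 + D2 − σ²(1+ρ²))/D2. Then F is strictly increasing in its first argument on the interior of 𝒟3: if (D1,D2) and (D1',D2) both lie in the interior of 𝒟3 and D1 < D1', then F(D1,D2) < F(D1',D2). -/

import Mathlib

/-!
Since `√((σ² - D₁)(σ² - D₂)) = √(σ² - D₁) · √(σ² - D₂)`, for fixed `D₂ > 0` the expression `F`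
is a positive multiple of `2k√(σ² - D₁) + D₁` plus a constant, where `k = ρ√(σ² - D₂)`. With
`u = √(σ² - D₁)` this is `σ² - u² + 2ku`, which decreases in `u` for `u ≥ k`, i.e. it increases
in `D₁` as long as `D₁ ≤ σ² - k² = σ²(1 - ρ²) + ρ²D₂`. Every point of `𝒟₃` satisfies this bound,
and points of its interior have `D₂ > 0`.
-/

/-- Region 𝒟₃ of distortion pairs. -/
def regD3 (σsq ρ : ℝ) : Set (ℝ × ℝ) :=
  {p | (0 ≤ p.1 ∧ p.1 ≤ σsq * (1 - ρ ^ 2) ∧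
        (σsq * (1 - ρ ^ 2) - p.1) * σsq / (σsq - p.1) ≤ p.2 ∧
        p.2 < σsq * (1 - ρ ^ 2) + ρ ^ 2 * p.1) ∨
       (σsq * (1 - ρ ^ 2) < p.1 ∧ p.1 ≤ σsq ∧
        (p.1 - σsq * (1 - ρ ^ 2)) / ρ ^ 2 < p.2 ∧ p.2 < σsq * (1 - ρ ^ 2) + ρ ^ 2 * p.1)}

/-- The limiting distortion expression of the auxiliary estimator. -/
noncomputable def Fdist (σsq ρ D1 D2 : ℝ) : ℝ :=
  σsq * (2 * ρ * Real.sqrt ((σsq - D1) * (σsq - D2)) + D1 + D2 - σsq * (1 + ρ ^ 2)) / D2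

open Set

theorem strictMonoOn_two_mul_mul_sqrt_sub_add (a k : ℝ) :
    StrictMonoOn (fun x => 2 * k * √(a - x) + x) (Iic (a - k ^ 2)) := by
  intro x _ y hy hxy
  have hya : 0 ≤ a - y := by nlinarith [sq_nonneg k, mem_Iic.mp hy]
  have hk : k ≤ √(a - y) :=
    (le_abs_self k).trans (Real.abs_le_sqrt (by linarith [mem_Iic.mp hy]))
  have hlt : √(a - y) < √(a - x) := Real.sqrt_lt_sqrt hya (by linarith)
  have hx2 := Real.sq_sqrt (show 0 ≤ a - x by linarith)
  have hy2 := Real.sq_sqrt hya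
  -- `y - x = (√(a-x) - √(a-y)) (√(a-x) + √(a-y))` and the second factor exceeds `2k`
  nlinarith [mul_lt_mul_of_pos_left (show 2 * k < √(a - x) + √(a - y) by linarith)
    (sub_pos.mpr hlt)]

section regD3

variable {σsq ρ : ℝ} {p : ℝ × ℝ}

theorem regD3_snd_nonneg (hσ : 0 ≤ σsq) (hp : p ∈ regD3 σsq ρ) : 0 ≤ p.2 := by
  rcases hp with ⟨-, hle, hlb, -⟩ | ⟨hgt, -, hlb, -⟩
  · refine le_trans (div_nonneg (mul_nonneg (by linarith) hσ) ?_) hlb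
    nlinarith [mul_nonneg hσ (sq_nonneg ρ)]
  · exact le_trans (div_nonneg (by linarith) (sq_nonneg ρ)) hlb.le

theorem regD3_snd_pos_of_mem_interior (hσ : 0 ≤ σsq) (hp : p ∈ interior (regD3 σsq ρ)) :
    0 < p.2 := by
  have hsub : regD3 σsq ρ ⊆ Prod.snd ⁻¹' Ici 0 := fun q hq => regD3_snd_nonneg hσ hq
  have := interior_mono hsub hp
  rwa [← isOpenMap_snd.preimage_interior_eq_interior_preimage continuous_snd, interior_Ici] at this

theorem regD3_fst_le (hσ : 0 ≤ σsq) (hp : p ∈ regD3 σsq ρ) : p.1 ≤ σsq := by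
  rcases hp with ⟨-, hle, -⟩ | ⟨-, hle, -⟩
  · nlinarith [mul_nonneg hσ (sq_nonneg ρ)]
  · exact hle

theorem regD3_snd_lt (hσ : 0 ≤ σsq) (hp : p ∈ regD3 σsq ρ) : p.2 < σsq := by
  have h1 := regD3_fst_le hσ hp
  rcases hp with ⟨-, -, -, hub⟩ | ⟨-, -, -, hub⟩ <;> nlinarith [sq_nonneg ρ]

theorem regD3_fst_le_add_sq_mul_snd (hσ : 0 ≤ σsq) (hρ : 0 < ρ) (hp : p ∈ regD3 σsq ρ) :
    p.1 ≤ σsq * (1 - ρ ^ 2) + ρ ^ 2 * p.2 := by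
  have h2 := regD3_snd_nonneg hσ hp
  rcases hp with ⟨-, hle, -⟩ | ⟨-, -, hlb, -⟩
  · nlinarith [mul_nonneg (sq_nonneg ρ) h2]
  · have := (div_lt_iff₀ (pow_pos hρ 2)).mp hlb
    linarith

end regD3

theorem Fdist_eq_of_le {σsq ρ D2 : ℝ} (D1 : ℝ) (hD2 : D2 ≤ σsq) :
    Fdist σsq ρ D1 D2 = σsq / D2 *
      (2 * (ρ * √(σsq - D2)) * √(σsq - D1) + D1 + (D2 - σsq * (1 + ρ ^ 2))) := by
  rw [Fdist, Real.sqrt_mul' _ (sub_nonneg.mpr hD2)]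
  ring

theorem Fdist_strictMono_on_interior_D3_general
    (σsq ρ D1 D1' D2 : ℝ)
    (hσ : 0 < σsq) (hρ0 : 0 < ρ)
    (h2 : (D1', D2) ∈ interior (regD3 σsq ρ))
    (hlt : D1 < D1') :
    Fdist σsq ρ D1 D2 < Fdist σsq ρ D1' D2 := by
  have hmem := interior_subset h2
  have hD2 : D2 < σsq := regD3_snd_lt hσ.le hmem
  have hbound : D1' ≤ σsq - (ρ * √(σsq - D2)) ^ 2 := by
    rw [mul_pow, Real.sq_sqrt (by linarith)]
    linarith [regD3_fst_le_add_sq_mul_snd hσ.le hρ0 hmem]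
  rw [Fdist_eq_of_le D1 hD2.le, Fdist_eq_of_le D1' hD2.le]
  refine mul_lt_mul_of_pos_left ((add_lt_add_iff_right _).mpr ?_)
    (div_pos hσ (regD3_snd_pos_of_mem_interior hσ.le h2))
  exact strictMonoOn_two_mul_mul_sqrt_sub_add σsq _ (hlt.le.trans hbound) hbound hlt

/-- **Lemma 5 (strict monotonicity of the distortion expression on `int 𝒟₃`).**
`F` is strictly increasing in its first argument on the interior of 𝒟₃. -/
theorem Fdist_strictMono_on_interior_D3
    (σsq ρ D1 D1' D2 : ℝ)
    (hσ : 0 < σsq) (hρ0 : 0 < ρ) (hρ1 : ρ < 1)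
    (h1 : (D1, D2) ∈ interior (regD3 σsq ρ))
    (h2 : (D1', D2) ∈ interior (regD3 σsq ρ))
    (hlt : D1 < D1') :
    Fdist σsq ρ D1 D2 < Fdist σsq ρ D1' D2 :=
  Fdist_strictMono_on_interior_D3_general σsq ρ D1 D1' D2 hσ hρ0 h2 hlt
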